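/- arXiv:2310.19161 — 2 statements merged into one kernel-verified Lean document; each statement's English description precedes it below -/
import Mathlib

section
/- The map f₁ : D → M, f₁(x,y) = (x, y) ∈ ℝ² × {0} ⊂ ℂ², minimizes the Dirichlet energy among all smooth maps g : D → M̄ with g(∂D) ⊂ ∂M that are homotopic to f₁ rel the free boundary condition, where M = {(z₁,z₂) ∈ ℂ² : (Re z₁)² + (Re z₂)² ≤ 1}. In particular E(f₁) = π and E(g) ≥ π for any such g whose projection π(g) = (Re g₁, Re g₂) : D → ℝ² has degree 1 onto the unit disk. -/
open MeasureTheory Complex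

/-- Dirichlet energy over the unit disk of a map into ℝ⁴. -/
noncomputable def energy (g : ℂ → EuclideanSpace ℝ (Fin 4)) : ℝ :=
  (1/2 : ℝ) * ∫ z in Metric.ball (0:ℂ) 1,
    (‖fderiv ℝ g z 1‖^2 + ‖fderiv ℝ g z Complex.I‖^2)

/-- The flat disk f₁(x,y) = (x, y, 0, 0) in ℝ⁴ = (x₁,x₂,y₁,y₂) ≅ ℂ². -/
noncomputable def fone : ℂ → EuclideanSpace ℝ (Fin 4) :=
  fun z => (WithLp.equiv 2 (Fin 4 → ℝ)).symm ![z.re, z.im, 0, 0]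

/-- Projection to the first two coordinates (x₁, x₂). -/
noncomputable def projR2 (p : EuclideanSpace ℝ (Fin 4)) : EuclideanSpace ℝ (Fin 2) :=
  (WithLp.equiv 2 (Fin 2 → ℝ)).symm ![p 0, p 1]

noncomputable def Tproj : EuclideanSpace ℝ (Fin 4) →L[ℝ] ℂ :=
  LinearMap.toContinuousLinearMap
  { toFun := fun p => ⟨p 0, p 1⟩
    map_add' := fun p q => by simp [Complex.ext_iff, PiLp.add_apply]
    map_smul' := fun c p => by simp [Complex.ext_iff, PiLp.smul_apply] }

noncomputable def Lone : ℂ →L[ℝ] EuclideanSpace ℝ (Fin 4) :=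
  LinearMap.toContinuousLinearMap
  { toFun := fone
    map_add' := fun z w => by
      ext i
      fin_cases i <;>
        simp [fone, WithLp.equiv_symm_apply, PiLp.toLp_apply, PiLp.add_apply]
    map_smul' := fun c z => by
      ext i
      fin_cases i <;>
        simp [fone, WithLp.equiv_symm_apply, PiLp.toLp_apply, PiLp.smul_apply] }

example : ⇑Lone = fone := rfl
example (p) : Tproj p = ⟨p 0, p 1⟩ := rfl

lemma abs_det_le (L : ℂ →L[ℝ] ℂ) : |L.det| ≤ ‖L 1‖ * ‖L I‖ := by
  have hdet : L.det = (L 1).re * (L I).im - (L I).re * (L 1).im := by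
    rw [ContinuousLinearMap.det, ← LinearMap.det_toMatrix Complex.basisOneI,
      Matrix.det_fin_two]
    simp [LinearMap.toMatrix_apply, Complex.coe_basisOneI, Complex.coe_basisOneI_repr]
  have h1 : ‖L 1‖ ^ 2 = (L 1).re ^ 2 + (L 1).im ^ 2 := by
    rw [Complex.sq_norm, Complex.normSq_apply]; ring
  have h2 : ‖L I‖ ^ 2 = (L I).re ^ 2 + (L I).im ^ 2 := by
    rw [Complex.sq_norm, Complex.normSq_apply]; ring
  have hnn : 0 ≤ ‖L 1‖ * ‖L I‖ := mul_nonneg (norm_nonneg _) (norm_nonneg _)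
  rw [hdet, abs_le]
  constructor <;> nlinarith [sq_nonneg ((L 1).re * (L I).re + (L 1).im * (L I).im),
    sq_nonneg (‖L 1‖ * ‖L I‖), norm_nonneg (L 1), norm_nonneg (L I)]

lemma norm_Lone_one : ‖Lone 1‖ = 1 := by
  have : Lone 1 = fone 1 := rfl
  rw [this, EuclideanSpace.norm_eq]
  simp [fone, Fin.sum_univ_four, WithLp.equiv_symm_apply, PiLp.toLp_apply]

lemma norm_Lone_I : ‖Lone I‖ = 1 := by
  have : Lone I = fone I := rfl
  rw [this, EuclideanSpace.norm_eq]
  simp [fone, Fin.sum_univ_four, WithLp.equiv_symm_apply, PiLp.toLp_apply]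

lemma energy_fone : energy fone = Real.pi := by
  have hfd : ∀ z : ℂ, fderiv ℝ fone z = Lone := fun z => Lone.hasFDerivAt.fderiv
  unfold energy
  rw [setIntegral_congr_fun measurableSet_ball (fun z _ => by
    rw [hfd z, norm_Lone_one, norm_Lone_I])]
  rw [setIntegral_const]
  simp [Complex.volume_ball]
  rw [Measure.real, Complex.volume_ball]; simp
  ring

lemma norm_Tproj_le (p : EuclideanSpace ℝ (Fin 4)) : ‖Tproj p‖ ≤ ‖p‖ := by
  have h1 : ‖Tproj p‖ = Real.sqrt ((p 0)^2 + (p 1)^2) := by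
    have : Tproj p = ⟨p 0, p 1⟩ := rfl
    rw [this, Complex.norm_def, Complex.normSq_apply]
    ring_nf
  rw [h1, EuclideanSpace.norm_eq]
  apply Real.sqrt_le_sqrt
  simp only [Real.norm_eq_abs, sq_abs, Fin.sum_univ_four]
  nlinarith [sq_nonneg (p 2), sq_nonneg (p 3), _root_.sq_abs (p 0), _root_.sq_abs (p 1), _root_.sq_abs (p 2), _root_.sq_abs (p 3)]

theorem part2 (g : ℂ → EuclideanSpace ℝ (Fin 4)) (hg : ContDiff ℝ (⊤ : ℕ∞) g)
    (hcov : Metric.closedBall (0 : EuclideanSpace ℝ (Fin 2)) 1 ⊆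
      (projR2 ∘ g) '' Metric.closedBall (0:ℂ) 1) :
    Real.pi ≤ energy g := by
  set D := Metric.closedBall (0:ℂ) 1 with hD
  set h : ℂ → ℂ := fun z => Tproj (g z) with hh
  have hgd : Differentiable ℝ g := hg.differentiable (by simp)
  have hhd : ∀ z, HasFDerivAt h (Tproj.comp (fderiv ℝ g z)) z := fun z =>
    Tproj.hasFDerivAt.comp z (hgd z).hasFDerivAt
  -- covering
  have hcover : Metric.closedBall (0:ℂ) 1 ⊆ h '' D := by
    intro w hw
    have hp : (WithLp.equiv 2 (Fin 2 → ℝ)).symm ![w.re, w.im] ∈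
        Metric.closedBall (0 : EuclideanSpace ℝ (Fin 2)) 1 := by
      rw [Metric.mem_closedBall, dist_zero_right, EuclideanSpace.norm_eq]
      rw [Metric.mem_closedBall, dist_zero_right] at hw
      have hnw : ‖w‖ = Real.sqrt (w.re^2 + w.im^2) := by
        rw [Complex.norm_def, Complex.normSq_apply]; ring_nf
      simp only [WithLp.equiv_symm_apply, PiLp.toLp_apply, Fin.sum_univ_two, Real.norm_eq_abs,
        _root_.sq_abs, Matrix.cons_val_zero, Matrix.cons_val_one, Matrix.head_cons]
      rw [← hnw]; exact hw
    obtain ⟨z, hz, hgz⟩ := hcov hp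
    refine ⟨z, hz, ?_⟩
    have h0 := congrArg (fun v => v 0) hgz
    have h1 := congrArg (fun v => v 1) hgz
    simp only [Function.comp_apply, projR2, WithLp.equiv_symm_apply, PiLp.toLp_apply,
      Matrix.cons_val_zero, Matrix.cons_val_one, Matrix.head_cons] at h0 h1
    show Tproj (g z) = w
    have : Tproj (g z) = ⟨g z 0, g z 1⟩ := rfl
    rw [this, h0, h1]
  -- pointwise bound
  set F : ℂ → ℝ := fun z => ‖fderiv ℝ g z 1‖^2 + ‖fderiv ℝ g z Complex.I‖^2 with hF
  have hdetle : ∀ z : ℂ, |(Tproj.comp (fderiv ℝ g z)).det| ≤ F z / 2 := by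
    intro z
    have h1 := abs_det_le (Tproj.comp (fderiv ℝ g z))
    have e1 : ‖(Tproj.comp (fderiv ℝ g z)) 1‖ ≤ ‖fderiv ℝ g z 1‖ := norm_Tproj_le _
    have e2 : ‖(Tproj.comp (fderiv ℝ g z)) Complex.I‖ ≤ ‖fderiv ℝ g z Complex.I‖ :=
      norm_Tproj_le _
    have n1 := norm_nonneg ((Tproj.comp (fderiv ℝ g z)) 1)
    have n2 := norm_nonneg ((Tproj.comp (fderiv ℝ g z)) Complex.I)
    have n3 := norm_nonneg (fderiv ℝ g z 1)
    have n4 := norm_nonneg (fderiv ℝ g z Complex.I)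
    have hsq := sq_nonneg (‖fderiv ℝ g z 1‖ - ‖fderiv ℝ g z Complex.I‖)
    simp only [hF]
    nlinarith [mul_le_mul e1 e2 n2 n3]
  -- integrability and continuity
  have hcf : Continuous (fderiv ℝ g) := hg.continuous_fderiv (by simp)
  have hFc : Continuous F := by
    apply Continuous.add
    · exact ((hcf.clm_apply continuous_const).norm.pow 2)
    · exact ((hcf.clm_apply continuous_const).norm.pow 2)
  have hInt : IntegrableOn F (Metric.ball (0:ℂ) 1) :=
    (hFc.continuousOn.integrableOn_compact (isCompact_closedBall _ _)).mono_set
      Metric.ball_subset_closedBall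
  have hae : (Metric.closedBall (0:ℂ) 1 : Set ℂ) =ᵐ[volume] Metric.ball (0:ℂ) 1 := by
    refine (MeasureTheory.ae_eq_set).2 ⟨?_, ?_⟩
    · rw [Metric.closedBall_diff_ball]
      exact Measure.addHaar_sphere volume 0 1
    · simp [Set.diff_eq_empty.2 Metric.ball_subset_closedBall]
  have h0 : 0 ≤ energy g := by
    unfold energy
    have : 0 ≤ ∫ z in Metric.ball (0:ℂ) 1, F z :=
      setIntegral_nonneg measurableSet_ball (fun z _ => by positivity)
    simp only [hF] at this
    linarith
  have key : ENNReal.ofReal Real.pi ≤ ENNReal.ofReal (energy g) := by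
    calc ENNReal.ofReal Real.pi = volume (Metric.closedBall (0:ℂ) 1) := by
          rw [Complex.volume_closedBall]
          simp [← NNReal.coe_real_pi, ENNReal.ofReal_coe_nnreal]
      _ ≤ volume (h '' D) := measure_mono hcover
      _ ≤ ∫⁻ z in D, ENNReal.ofReal |(Tproj.comp (fderiv ℝ g z)).det| :=
          addHaar_image_le_lintegral_abs_det_fderiv volume measurableSet_closedBall
            (fun z _ => (hhd z).hasFDerivWithinAt)
      _ ≤ ∫⁻ z in D, ENNReal.ofReal (F z / 2) :=
          lintegral_mono (fun z => ENNReal.ofReal_le_ofReal (hdetle z))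
      _ = ∫⁻ z in Metric.ball (0:ℂ) 1, ENNReal.ofReal (F z / 2) :=
          setLIntegral_congr hae
      _ = ENNReal.ofReal (∫ z in Metric.ball (0:ℂ) 1, F z / 2) :=
          (ofReal_integral_eq_lintegral_ofReal (hInt.div_const 2)
            (Filter.Eventually.of_forall (fun z => by positivity))).symm
      _ = ENNReal.ofReal (energy g) := by
          unfold energy
          rw [integral_div]
          congr 1
          simp only [hF]
          ring
  exact (ENNReal.ofReal_le_ofReal_iff h0).1 key

/-- f₁ minimizes the Dirichlet energy for the free boundary problem in
M̄ = {x₁² + x₂² ≤ 1}: E(f₁) = π, and E(g) ≥ π for any smooth competitor g mapping the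
closed disk into M̄, its boundary into ∂M, and whose projection (degree one) covers the
closed unit disk. -/
theorem stmt7 :
    energy fone = Real.pi ∧
    ∀ g : ℂ → EuclideanSpace ℝ (Fin 4), ContDiff ℝ (⊤ : ℕ∞) g →
      (∀ z ∈ Metric.closedBall (0:ℂ) 1, (g z 0)^2 + (g z 1)^2 ≤ 1) →
      (∀ z ∈ Metric.sphere (0:ℂ) 1, (g z 0)^2 + (g z 1)^2 = 1) →
      Metric.closedBall (0 : EuclideanSpace ℝ (Fin 2)) 1 ⊆
        (projR2 ∘ g) '' Metric.closedBall (0:ℂ) 1 →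
      Real.pi ≤ energy g := by
  exact ⟨energy_fone, fun g hg _ _ hcov => part2 g hg hcov⟩
end

section
/- For all smooth σ, φ on the closed unit disk with σ = 0 on ∂D, the quadratic form Q(σ,φ) = ∫_D [−8σ φ_θ + (r φ_r + σ_θ)² + (r σ_r − φ_θ)²] dr dθ (with measure r dr dθ appropriately normalized as in the polar rewriting) equals ∫_D [(r φ_r − σ_θ)² + (r σ_r + φ_θ)²] dr dθ, and is therefore nonnegative. -/
open MeasureTheory Complex intervalIntegral

noncomputable def pol (r θ : ℝ) : ℂ := (r : ℂ) * Complex.exp (θ * Complex.I)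

noncomputable def pdr (σ : ℂ → ℝ) (r θ : ℝ) : ℝ := deriv (fun s : ℝ => σ (pol s θ)) r

noncomputable def pdθ (σ : ℂ → ℝ) (r θ : ℝ) : ℝ := deriv (fun t : ℝ => σ (pol r t)) θ

noncomputable def FF (f : ℂ → ℝ) : ℝ × ℝ → ℝ := fun p => f (pol p.1 p.2)
noncomputable def d1 (f : ℂ → ℝ) (p : ℝ × ℝ) : ℝ := fderiv ℝ (FF f) p (1, 0)
noncomputable def d2 (f : ℂ → ℝ) (p : ℝ × ℝ) : ℝ := fderiv ℝ (FF f) p (0, 1)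
noncomputable def d21 (f : ℂ → ℝ) (p : ℝ × ℝ) : ℝ := fderiv ℝ (fderiv ℝ (FF f)) p (0, 1) (1, 0)

local notation "SM" => ((⊤ : ℕ∞) : WithTop ℕ∞)

lemma contDiff_pol : ContDiff ℝ SM (fun p : ℝ × ℝ => pol p.1 p.2) := by
  unfold pol
  exact (Complex.ofRealCLM.contDiff.comp contDiff_fst).mul
    (Complex.contDiff_exp.comp ((Complex.ofRealCLM.contDiff.comp contDiff_snd).mul contDiff_const))

lemma contDiff_FF {f : ℂ → ℝ} (hf : ContDiff ℝ (⊤ : ℕ∞) f) : ContDiff ℝ SM (FF f) :=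
  (hf.of_le (by simp)).comp contDiff_pol

lemma line1 (θ r : ℝ) : HasDerivAt (fun s : ℝ => (s, θ)) ((1:ℝ), (0:ℝ)) r :=
  (hasDerivAt_id r).prodMk (hasDerivAt_const r θ)

lemma line2 (r θ : ℝ) : HasDerivAt (fun t : ℝ => (r, t)) ((0:ℝ), (1:ℝ)) θ :=
  (hasDerivAt_const θ r).prodMk (hasDerivAt_id θ)

variable {f : ℂ → ℝ}

lemma hSM1 : SM + 1 ≤ SM := by simp

lemma hd1 (hF : ContDiff ℝ SM (FF f)) (θ s : ℝ) :
    HasDerivAt (fun s : ℝ => f (pol s θ)) (d1 f (s, θ)) s := by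
  have h := (((hF.differentiable (by simp)) (s, θ)).hasFDerivAt).comp_hasDerivAt s (line1 θ s)
  exact h

lemma hd2 (hF : ContDiff ℝ SM (FF f)) (r t : ℝ) :
    HasDerivAt (fun t : ℝ => f (pol r t)) (d2 f (r, t)) t := by
  have h := (((hF.differentiable (by simp)) (r, t)).hasFDerivAt).comp_hasDerivAt t (line2 r t)
  exact h

lemma hd21 (hF : ContDiff ℝ SM (FF f)) (r θ : ℝ) :
    HasDerivAt (fun t => d1 f (r, t)) (d21 f (r, θ)) θ := by
  have hF' : ContDiff ℝ SM (fderiv ℝ (FF f)) := hF.fderiv_right hSM1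
  have h := (((hF'.differentiable (by simp)) (r, θ)).hasFDerivAt).comp_hasDerivAt θ (line2 r θ)
  have h2 := h.clm_apply (hasDerivAt_const θ ((1:ℝ), (0:ℝ)))
  simpa [d1, d21] using h2

lemma hd12 (hF : ContDiff ℝ SM (FF f)) (r θ : ℝ) :
    HasDerivAt (fun s => d2 f (s, θ)) (d21 f (r, θ)) r := by
  have hF' : ContDiff ℝ SM (fderiv ℝ (FF f)) := hF.fderiv_right hSM1
  have h := (((hF'.differentiable (by simp)) (r, θ)).hasFDerivAt).comp_hasDerivAt r (line1 θ r)
  have h2 := h.clm_apply (hasDerivAt_const r ((0:ℝ), (1:ℝ)))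
  have hsymm := ((hF.contDiffAt (x := (r, θ))).isSymmSndFDerivAt (by rw [minSmoothness_of_isRCLikeNormedField]; exact (WithTop.coe_le_coe.mpr (le_top : (2:ℕ∞) ≤ ⊤)))) ((1:ℝ), (0:ℝ)) ((0:ℝ), (1:ℝ))
  have h3 : HasDerivAt (fun s => d2 f (s, θ)) ((fderiv ℝ (fderiv ℝ (FF f)) (r, θ)) (1, 0) (0, 1)) r := by
    simpa [Function.comp, d2] using h2
  rw [d21, ← hsymm]
  exact h3

lemma cont_d1 (hF : ContDiff ℝ SM (FF f)) : Continuous (d1 f) := by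
  have hF' : ContDiff ℝ SM (fderiv ℝ (FF f)) := hF.fderiv_right hSM1
  exact hF'.continuous.clm_apply continuous_const

lemma cont_d2 (hF : ContDiff ℝ SM (FF f)) : Continuous (d2 f) := by
  have hF' : ContDiff ℝ SM (fderiv ℝ (FF f)) := hF.fderiv_right hSM1
  exact hF'.continuous.clm_apply continuous_const

lemma cont_d21 (hF : ContDiff ℝ SM (FF f)) : Continuous (d21 f) := by
  have hF' : ContDiff ℝ SM (fderiv ℝ (FF f)) := hF.fderiv_right hSM1
  have hF'' : ContDiff ℝ SM (fderiv ℝ (fderiv ℝ (FF f))) := hF'.fderiv_right hSM1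
  exact (hF''.continuous.clm_apply continuous_const).clm_apply continuous_const

/-- for smooth σ, φ on the closed disk with σ = 0 on ∂D, the quadratic
form Q(σ,φ) = ∫_D [−8σφ_θ + (rφ_r + σ_θ)² + (rσ_r − φ_θ)²] (measure r dr dθ) equals
∫_D [(rφ_r − σ_θ)² + (rσ_r + φ_θ)²], and is therefore nonnegative. -/
theorem stmt11 (σ φ : ℂ → ℝ) (hσ : ContDiff ℝ (⊤ : ℕ∞) σ) (hφ : ContDiff ℝ (⊤ : ℕ∞) φ)
    (hσ0 : ∀ z ∈ Metric.sphere (0:ℂ) 1, σ z = 0) :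
    (∫ θ in (0:ℝ)..(2*Real.pi), ∫ r in (0:ℝ)..1,
        r * (-8 * σ (pol r θ) * pdθ φ r θ
          + (r * pdr φ r θ + pdθ σ r θ)^2 + (r * pdr σ r θ - pdθ φ r θ)^2)) =
      (∫ θ in (0:ℝ)..(2*Real.pi), ∫ r in (0:ℝ)..1,
        r * ((r * pdr φ r θ - pdθ σ r θ)^2 + (r * pdr σ r θ + pdθ φ r θ)^2)) ∧
    0 ≤ ∫ θ in (0:ℝ)..(2*Real.pi), ∫ r in (0:ℝ)..1,
        r * (-8 * σ (pol r θ) * pdθ φ r θ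
          + (r * pdr φ r θ + pdθ σ r θ)^2 + (r * pdr σ r θ - pdθ φ r θ)^2) := by
  have hFσ : ContDiff ℝ SM (FF σ) := contDiff_FF hσ
  have hFφ : ContDiff ℝ SM (FF φ) := contDiff_FF hφ
  have eσr : ∀ r θ : ℝ, pdr σ r θ = d1 σ (r, θ) := fun r θ => (hd1 hFσ θ r).deriv
  have eσθ : ∀ r θ : ℝ, pdθ σ r θ = d2 σ (r, θ) := fun r θ => (hd2 hFσ r θ).deriv
  have eφr : ∀ r θ : ℝ, pdr φ r θ = d1 φ (r, θ) := fun r θ => (hd1 hFφ θ r).deriv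
  have eφθ : ∀ r θ : ℝ, pdθ φ r θ = d2 φ (r, θ) := fun r θ => (hd2 hFφ r θ).deriv
  have eFσ : ∀ r θ : ℝ, σ (pol r θ) = FF σ (r, θ) := fun r θ => rfl
  have cσ : Continuous (FF σ) := hFσ.continuous
  have c1σ : Continuous (d1 σ) := cont_d1 hFσ
  have c2σ : Continuous (d2 σ) := cont_d2 hFσ
  have c1φ : Continuous (d1 φ) := cont_d1 hFφ
  have c2φ : Continuous (d2 φ) := cont_d2 hFφ
  have c21φ : Continuous (d21 φ) := cont_d21 hFφ
  have hσ1 : ∀ θ : ℝ, σ (pol 1 θ) = 0 := by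
    intro θ
    apply hσ0
    simp [pol, Complex.dist_eq, Complex.norm_exp_ofReal_mul_I]
  have hper : ∀ s : ℝ, pol s (2*Real.pi) = pol s 0 := by
    intro s
    unfold pol
    push_cast
    rw [Complex.exp_two_pi_mul_I]
    simp
  -- D : the θ-derivative of B(r,θ) = 4 r² σ φ_r
  set D : ℝ × ℝ → ℝ :=
    fun p => 4*p.1^2 * (d2 σ p * d1 φ p + FF σ p * d21 φ p) with hDdef
  have hDc : Continuous D := by
    apply ((continuous_const.mul (continuous_fst.pow 2)).mul _)
    exact (c2σ.mul c1φ).add (cσ.mul c21φ)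
  -- FTC in r : ∫₀¹ ∂r(-4 r² σ φ_θ) dr = 0
  have hIr : ∀ θ : ℝ, (∫ r in (0:ℝ)..1,
      ((-4*(2*r)) * (FF σ (r,θ) * d2 φ (r,θ))
        + (-4*r^2) * (d1 σ (r,θ) * d2 φ (r,θ) + FF σ (r,θ) * d21 φ (r,θ)))) = 0 := by
    intro θ
    have hA : ∀ r ∈ Set.uIcc (0:ℝ) 1, HasDerivAt (fun s => (-4*s^2) * (FF σ (s, θ) * d2 φ (s, θ)))
        ((-4*(2*r)) * (FF σ (r,θ) * d2 φ (r,θ))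
          + (-4*r^2) * (d1 σ (r,θ) * d2 φ (r,θ) + FF σ (r,θ) * d21 φ (r,θ))) r := by
      intro r _
      have h1 : HasDerivAt (fun s : ℝ => -4*s^2) (-4*(2*r)) r := by
        simpa using (hasDerivAt_pow 2 r).const_mul (-4:ℝ)
      exact h1.mul ((hd1 hFσ θ r).mul (hd12 hFφ r θ))
    rw [intervalIntegral.integral_eq_sub_of_hasDerivAt hA (Continuous.intervalIntegrable (by fun_prop) _ _)]
    have : FF σ (1, θ) = 0 := hσ1 θ
    simp [this]
  -- FTC in θ : ∫₀^{2π} D(r,θ) dθ = 0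
  have hIθ : ∀ r : ℝ, (∫ t in (0:ℝ)..(2*Real.pi), D (r, t)) = 0 := by
    intro r
    have hB : ∀ t ∈ Set.uIcc (0:ℝ) (2*Real.pi),
        HasDerivAt (fun t => 4*r^2 * (FF σ (r,t) * d1 φ (r,t))) (D (r,t)) t := by
      intro t _
      have := ((hd2 hFσ r t).mul (hd21 hFφ r t)).const_mul (4*r^2)
      simpa [hDdef, FF, mul_comm, mul_left_comm, mul_assoc] using this
    rw [intervalIntegral.integral_eq_sub_of_hasDerivAt hB (Continuous.intervalIntegrable (by fun_prop) _ _)]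
    have e1 : FF σ (r, 2*Real.pi) = FF σ (r, 0) := by simp only [FF]; rw [hper]
    have e2 : d1 φ (r, 2*Real.pi) = d1 φ (r, 0) := by
      rw [← eφr, ← eφr]
      unfold pdr
      congr 1
      funext s
      rw [hper s]
    rw [e1, e2]
    ring
  -- swap the double integral of D
  have h2π : (0:ℝ) ≤ 2*Real.pi := by positivity
  have hswap : (∫ θ in (0:ℝ)..(2*Real.pi), ∫ r in (0:ℝ)..1, D (r, θ)) = 0 := by
    rw [intervalIntegral.integral_of_le h2π]
    have h1 : ∀ θ : ℝ, (∫ r in (0:ℝ)..1, D (r, θ)) = ∫ r in Set.Ioc (0:ℝ) 1, D (r, θ) :=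
      fun θ => intervalIntegral.integral_of_le zero_le_one
    simp_rw [h1]
    have hint : Integrable (Function.uncurry (fun θ r => D (r, θ)))
        ((volume.restrict (Set.Ioc (0:ℝ) (2*Real.pi))).prod (volume.restrict (Set.Ioc (0:ℝ) 1))) := by
      rw [Measure.prod_restrict]
      have : IntegrableOn (D ∘ Prod.swap)
          (Set.Icc (0:ℝ) (2*Real.pi) ×ˢ Set.Icc (0:ℝ) 1) (volume.prod volume) := by
        rw [← Measure.volume_eq_prod]
        exact ((hDc.comp continuous_swap).continuousOn).integrableOn_compact
          (isCompact_Icc.prod isCompact_Icc)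
      exact this.mono_set (Set.prod_mono Set.Ioc_subset_Icc_self Set.Ioc_subset_Icc_self)
    rw [MeasureTheory.integral_integral_swap hint]
    have h2 : ∀ r : ℝ, (∫ θ in Set.Ioc (0:ℝ) (2*Real.pi), D (r, θ)) = 0 := by
      intro r
      rw [← intervalIntegral.integral_of_le h2π]
      exact hIθ r
    simp [h2]
  -- pointwise identity and per-θ splitting
  have key : ∀ θ : ℝ,
      (∫ r in (0:ℝ)..1, r * (-8 * σ (pol r θ) * pdθ φ r θ
          + (r * pdr φ r θ + pdθ σ r θ)^2 + (r * pdr σ r θ - pdθ φ r θ)^2))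
      = (∫ r in (0:ℝ)..1, r * ((r * pdr φ r θ - pdθ σ r θ)^2 + (r * pdr σ r θ + pdθ φ r θ)^2))
        + ∫ r in (0:ℝ)..1, D (r, θ) := by
    intro θ
    have hpt : Set.EqOn
        (fun r => r * (-8 * σ (pol r θ) * pdθ φ r θ
          + (r * pdr φ r θ + pdθ σ r θ)^2 + (r * pdr σ r θ - pdθ φ r θ)^2))
        (fun r => (r * ((r * pdr φ r θ - pdθ σ r θ)^2 + (r * pdr σ r θ + pdθ φ r θ)^2))
          + (D (r, θ)
            + ((-4*(2*r)) * (FF σ (r,θ) * d2 φ (r,θ))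
              + (-4*r^2) * (d1 σ (r,θ) * d2 φ (r,θ) + FF σ (r,θ) * d21 φ (r,θ)))))
        (Set.uIcc (0:ℝ) 1) := by
      intro r _
      simp only [eσr, eσθ, eφr, eφθ, eFσ, hDdef]
      ring
    rw [intervalIntegral.integral_congr hpt]
    have i1 : IntervalIntegrable
        (fun r => r * ((r * pdr φ r θ - pdθ σ r θ)^2 + (r * pdr σ r θ + pdθ φ r θ)^2))
        volume 0 1 := by
      apply Continuous.intervalIntegrable
      have : (fun r => r * ((r * pdr φ r θ - pdθ σ r θ)^2 + (r * pdr σ r θ + pdθ φ r θ)^2))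
          = (fun r => r * ((r * d1 φ (r,θ) - d2 σ (r,θ))^2 + (r * d1 σ (r,θ) + d2 φ (r,θ))^2)) := by
        funext r; simp only [eσr, eσθ, eφr, eφθ]
      rw [this]
      fun_prop
    have i2 : IntervalIntegrable (fun r => D (r, θ)) volume 0 1 :=
      Continuous.intervalIntegrable (by fun_prop) _ _
    have i3 : IntervalIntegrable
        (fun r => ((-4*(2*r)) * (FF σ (r,θ) * d2 φ (r,θ))
          + (-4*r^2) * (d1 σ (r,θ) * d2 φ (r,θ) + FF σ (r,θ) * d21 φ (r,θ)))) volume 0 1 :=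
      Continuous.intervalIntegrable (by fun_prop) _ _
    rw [intervalIntegral.integral_add i1 (i2.add i3), intervalIntegral.integral_add i2 i3, hIr θ]
    ring
  -- continuity in θ of the inner integrals
  have cIR : Continuous (fun θ => ∫ r in (0:ℝ)..1,
      r * ((r * pdr φ r θ - pdθ σ r θ)^2 + (r * pdr σ r θ + pdθ φ r θ)^2)) := by
    have : (fun θ => ∫ r in (0:ℝ)..1,
        r * ((r * pdr φ r θ - pdθ σ r θ)^2 + (r * pdr σ r θ + pdθ φ r θ)^2))
        = (fun θ => ∫ r in (0:ℝ)..1,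
        r * ((r * d1 φ (r,θ) - d2 σ (r,θ))^2 + (r * d1 σ (r,θ) + d2 φ (r,θ))^2)) := by
      funext θ; simp only [eσr, eσθ, eφr, eφθ]
    rw [this]
    apply intervalIntegral.continuous_parametric_intervalIntegral_of_continuous'
    fun_prop
  have cID : Continuous (fun θ => ∫ r in (0:ℝ)..1, D (r, θ)) := by
    apply intervalIntegral.continuous_parametric_intervalIntegral_of_continuous'
    fun_prop
  have hmain : (∫ θ in (0:ℝ)..(2*Real.pi), ∫ r in (0:ℝ)..1,
      r * (-8 * σ (pol r θ) * pdθ φ r θ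
        + (r * pdr φ r θ + pdθ σ r θ)^2 + (r * pdr σ r θ - pdθ φ r θ)^2))
      = (∫ θ in (0:ℝ)..(2*Real.pi), ∫ r in (0:ℝ)..1,
      r * ((r * pdr φ r θ - pdθ σ r θ)^2 + (r * pdr σ r θ + pdθ φ r θ)^2)) := by
    rw [intervalIntegral.integral_congr (g := fun θ =>
        (∫ r in (0:ℝ)..1, r * ((r * pdr φ r θ - pdθ σ r θ)^2 + (r * pdr σ r θ + pdθ φ r θ)^2))
          + ∫ r in (0:ℝ)..1, D (r, θ)) (fun θ _ => key θ)]
    rw [intervalIntegral.integral_add (cIR.intervalIntegrable _ _) (cID.intervalIntegrable _ _),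
      hswap, add_zero]
  constructor
  · exact hmain
  · rw [hmain]
    apply intervalIntegral.integral_nonneg h2π
    intro θ _
    apply intervalIntegral.integral_nonneg zero_le_one
    intro r hr
    have hr0 : 0 ≤ r := hr.1
    positivity
end
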